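/- Let r ≥ 1 and let (v_1,…,v_r) be a system of linear functionals on ℂ[x] whose moment matrix M admits a Gauss–Borel factorisation M = A·B. Then there is a unique infinite matrix H satisfying A H = Λ A entrywise, and this H also satisfies H B = B (Λᵀ)^r entrywise; moreover H is a banded unit-lower-Hessenberg matrix with r subdiagonals, i.e. H_{n,n+1} = 1, H_{n,ℓ} = 0 for ℓ > n+1 and for ℓ < n−r; and the monic polynomials P_n determined by x^n = Σ_{k=0}^{n} A_{n,k} P_k(x) and the type I linear forms q_n := Σ_{j=1}^{r} (Σ_{m} C_{rm+j−1,n} x^m)·v_j (C := B^{-1}) satisfy the recurrence relations x P_n(x) = P_{n+1}(x) + Σ_{ℓ=max(0,n−r)}^{n} H_{n,ℓ} P_ℓ(x) as an identity of polynomials, and x·q_k = q_{k−1} + Σ_{n=k}^{k+r} H_{n,k} q_n as an identity of linear functionals (with q_{−1} := 0). -/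

import Mathlib

open Polynomial Finset

noncomputable section

/-- A linear functional on `ℂ[x]`. -/
abbrev LF := Polynomial ℂ →ₗ[ℂ] ℂ

/-- The moment matrix of a system of `r` linear functionals (0-indexed:
`v j` is the paper's `v_{j+1}`): entry `(n, r*k+j)` is `⟨v_{j+1}, x^{k+n}⟩`. -/
def momentMatrix (r : ℕ) (v : ℕ → LF) (n ℓ : ℕ) : ℂ :=
  v (ℓ % r) (Polynomial.X ^ (ℓ / r + n))

/-- A Gauss–Borel factorisation `M = A·B` of the moment matrix. -/
structure GaussBorel (r : ℕ) (v : ℕ → LF) (A B : ℕ → ℕ → ℂ) : Prop where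
  A_diag : ∀ n, A n n = 1
  A_upper : ∀ n ℓ, n < ℓ → A n ℓ = 0
  B_lower : ∀ n ℓ, ℓ < n → B n ℓ = 0
  B_diag : ∀ n, B n n ≠ 0
  factor : ∀ n ℓ, momentMatrix r v n ℓ = ∑ k ∈ Finset.range (n + 1), A n k * B k ℓ

/-- The polynomial `C_{n,j+1}(x) = Σ_{m : r m + j ≤ n} C_{r m + j, n} x^m`. -/
def Cpoly (r : ℕ) (Cm : ℕ → ℕ → ℂ) (n j : ℕ) : Polynomial ℂ :=
  ∑ m ∈ (Finset.range (n + 1)).filter (fun m => r * m + j ≤ n),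
    Polynomial.C (Cm (r * m + j) n) * Polynomial.X ^ m

/-- The type I linear form `q_n = Σ_{j=1}^{r} C_{n,j}(x)·v_j`, as a function
on polynomials: `q_n(f) = Σ_{j<r} ⟨v_{j+1}, C_{n,j+1}(x)·f⟩`. -/
def qForm (r : ℕ) (v : ℕ → LF) (Cm : ℕ → ℕ → ℂ) (n : ℕ) (f : Polynomial ℂ) : ℂ :=
  ∑ j ∈ Finset.range r, v j (Cpoly r Cm n j * f)


/-!
Column by column, `A H = Λ A` is a unit lower-triangular system, solved by forward substitution.
Triangularity also makes `A` injective on sequences, and this is the tool for every other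
identity. The moments depend only on `k + n`, so `Λ M = M (Λᵀ)^r`; hence
`A (H B) = Λ A B = Λ M = A B (Λᵀ)^r` and `H B = B (Λᵀ)^r`. The band structure of `H` comes from
the triangularity of `A` (above the diagonal) and of `B` (below it). Multiplication by `x` shifts
the monomials `x^n = Σ_k A_{n,k} P_k`, so on the `P_k` it acts through `H`. Dually,
`q_n(x^s) = (M C)_{s,n} = A_{s,n}`, and `q_k(x^{s+1}) = A_{s+1,k} = (A H)_{s,k}` is the type I
recurrence on monomials.
-/

theorem sum_range_eq_sum_range_of_eq_zero {M : Type*} [AddCommMonoid M] {f : ℕ → M} {m n : ℕ}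
    (hmn : m ≤ n) (hf : ∀ k, m ≤ k → k < n → f k = 0) :
    ∑ k ∈ range n, f k = ∑ k ∈ range m, f k :=
  (sum_subset (range_subset_range.mpr hmn) fun k hk hk' =>
    hf k (by simpa using hk') (by simpa using hk)).symm

theorem sum_range_mul_eq_of_triangular {R : Type*} [Semiring R] {A B : ℕ → ℕ → R}
    (hAu : ∀ n ℓ, n < ℓ → A n ℓ = 0) (hBl : ∀ n ℓ, ℓ < n → B n ℓ = 0) (n ℓ : ℕ) :
    ∑ k ∈ range (ℓ + 1), A n k * B k ℓ = ∑ k ∈ range (n + 1), A n k * B k ℓ := by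
  rw [sum_range_eq_sum_range_of_eq_zero (m := min n ℓ + 1) (by omega) fun k _ _ => by
      rw [hAu n k (by omega), zero_mul],
    sum_range_eq_sum_range_of_eq_zero (n := n + 1) (m := min n ℓ + 1) (by omega) fun k _ _ => by
      rw [hBl k ℓ (by omega), mul_zero]]

section LowerTriangular

variable {K M : Type*} [Field K] [AddCommGroup M] [Module K M]

theorem eq_zero_of_sum_lowerTriangular_smul_eq_zero {L : ℕ → ℕ → K} (hL : ∀ n, L n n ≠ 0)
    {F : ℕ → M} {N : ℕ} (h : ∀ n < N, ∑ k ∈ range (n + 1), L n k • F k = 0) :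
    ∀ n < N, F n = 0 := by
  intro n
  induction n using Nat.strong_induction_on with
  | _ n ih =>
    intro hn
    have hprefix : ∑ k ∈ range n, L n k • F k = 0 := sum_eq_zero fun k hk => by
      rw [ih k (mem_range.mp hk) (by simp at hk; omega), smul_zero]
    have h_n := h n hn
    rwa [sum_range_succ, hprefix, zero_add, smul_eq_zero, or_iff_right (hL n)] at h_n

theorem eq_of_sum_lowerTriangular_smul_eq {L : ℕ → ℕ → K} (hL : ∀ n, L n n ≠ 0)
    {F G : ℕ → M}
    (h : ∀ n, ∑ k ∈ range (n + 1), L n k • F k = ∑ k ∈ range (n + 1), L n k • G k) :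
    F = G := by
  funext n
  refine sub_eq_zero.mp (eq_zero_of_sum_lowerTriangular_smul_eq_zero hL (F := F - G)
    (N := n + 1) (fun m _ => ?_) n n.lt_succ_self)
  simp only [Pi.sub_apply, smul_sub, sum_sub_distrib, h m, sub_self]

def lowerTriangularSolve (L : ℕ → ℕ → K) (b : ℕ → M) : ℕ → M
  | n => (L n n)⁻¹ • (b n - ∑ k : Fin n, L n k • lowerTriangularSolve L b k)

theorem sum_smul_lowerTriangularSolve {L : ℕ → ℕ → K} (hL : ∀ n, L n n ≠ 0) (b : ℕ → M)
    (n : ℕ) : ∑ k ∈ range (n + 1), L n k • lowerTriangularSolve L b k = b n := by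
  rw [sum_range_succ, lowerTriangularSolve, smul_smul, mul_inv_cancel₀ (hL n), one_smul,
    Fin.sum_univ_eq_sum_range (fun k => L n k • lowerTriangularSolve L b k)]
  abel

theorem existsUnique_lowerTriangular_mul_eq {L : ℕ → ℕ → K} (hL : ∀ n, L n n ≠ 0)
    (R : ℕ → ℕ → K) :
    ∃! X : ℕ → ℕ → K, ∀ n ℓ, ∑ k ∈ range (n + 1), L n k * X k ℓ = R n ℓ := by
  refine ⟨fun k ℓ => lowerTriangularSolve L (fun n => R n ℓ) k,
    fun n ℓ => sum_smul_lowerTriangularSolve hL (fun n => R n ℓ) n, fun X hX => ?_⟩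
  funext n ℓ
  refine congrFun (eq_of_sum_lowerTriangular_smul_eq hL (F := fun k => X k ℓ) fun m => ?_) n
  simp only [smul_eq_mul, hX m ℓ]
  exact (sum_smul_lowerTriangularSolve hL (fun n => R n ℓ) m).symm

end LowerTriangular

section Hessenberg

variable {K : Type*} [Field K] {A H : ℕ → ℕ → K}

theorem hessenberg_eq_zero_of_succ_lt (hA : ∀ n, A n n = 1) (hAu : ∀ n ℓ, n < ℓ → A n ℓ = 0)
    (hH : ∀ n ℓ, ∑ k ∈ range (n + 1), A n k * H k ℓ = A (n + 1) ℓ) (n ℓ : ℕ)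
    (h : n + 1 < ℓ) : H n ℓ = 0 :=
  eq_zero_of_sum_lowerTriangular_smul_eq_zero (L := A) (fun m => by simp [hA])
    (F := fun k => H k ℓ) (N := ℓ - 1)
    (fun m _ => by rw [← hAu (m + 1) ℓ (by omega), ← hH]; rfl) n (by omega)

theorem hessenberg_succ_self (hA : ∀ n, A n n = 1) (hAu : ∀ n ℓ, n < ℓ → A n ℓ = 0)
    (hH : ∀ n ℓ, ∑ k ∈ range (n + 1), A n k * H k ℓ = A (n + 1) ℓ) (n : ℕ) :
    H n (n + 1) = 1 := by
  have h := hH n (n + 1)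
  rwa [sum_range_succ, sum_eq_zero fun k hk => by
      rw [hessenberg_eq_zero_of_succ_lt hA hAu hH k (n + 1) (by simp at hk; omega), mul_zero],
    zero_add, hA, one_mul, hA] at h

theorem apply_eq_sum_hessenberg_smul {M : Type*} [AddCommGroup M] [Module K M]
    (hA : ∀ n, A n n = 1) (hAu : ∀ n ℓ, n < ℓ → A n ℓ = 0)
    (hH : ∀ n ℓ, ∑ k ∈ range (n + 1), A n k * H k ℓ = A (n + 1) ℓ) {P : ℕ → M}
    (T : M →ₗ[K] M)
    (hT : ∀ n, T (∑ k ∈ range (n + 1), A n k • P k)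
      = ∑ k ∈ range (n + 1 + 1), A (n + 1) k • P k)
    (n : ℕ) : T (P n) = ∑ ℓ ∈ range (n + 2), H n ℓ • P ℓ := by
  refine congrFun (eq_of_sum_lowerTriangular_smul_eq (fun m => by simp [hA]) (L := A)
    (F := fun k => T (P k)) (G := fun k => ∑ ℓ ∈ range (k + 2), H k ℓ • P ℓ) fun m => ?_) n
  calc ∑ k ∈ range (m + 1), A m k • T (P k)
      = ∑ ℓ ∈ range (m + 2), A (m + 1) ℓ • P ℓ := by
        rw [← hT, map_sum]
        simp only [map_smul]
    _ = ∑ ℓ ∈ range (m + 2), ∑ k ∈ range (m + 1), A m k • H k ℓ • P ℓ := by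
        refine sum_congr rfl fun ℓ _ => ?_
        simp only [← hH, sum_smul, smul_smul]
    _ = ∑ k ∈ range (m + 1), A m k • ∑ ℓ ∈ range (m + 2), H k ℓ • P ℓ := by
        rw [sum_comm]
        simp only [smul_sum]
    _ = ∑ k ∈ range (m + 1), A m k • ∑ ℓ ∈ range (k + 2), H k ℓ • P ℓ :=
        sum_congr rfl fun k hk => by
          rw [sum_range_eq_sum_range_of_eq_zero (m := k + 2) (by simp at hk; omega)
            fun ℓ _ _ => by
              rw [hessenberg_eq_zero_of_succ_lt hA hAu hH k ℓ (by omega), zero_smul]]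

theorem hessenberg_mul_eq_mul_shift {B Mom : ℕ → ℕ → K} {d : ℕ} (hA : ∀ n, A n n = 1)
    (hAu : ∀ n ℓ, n < ℓ → A n ℓ = 0) (hBl : ∀ n ℓ, ℓ < n → B n ℓ = 0)
    (hH : ∀ n ℓ, ∑ k ∈ range (n + 1), A n k * H k ℓ = A (n + 1) ℓ)
    (hfac : ∀ n ℓ, Mom n ℓ = ∑ k ∈ range (n + 1), A n k * B k ℓ)
    (hshift : ∀ n ℓ, Mom (n + 1) ℓ = Mom n (ℓ + d)) (n ℓ : ℕ) :
    ∑ k ∈ range (ℓ + 1), H n k * B k ℓ = B n (ℓ + d) := by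
  refine congrFun (eq_of_sum_lowerTriangular_smul_eq (fun m => by simp [hA]) (L := A)
    (F := fun k => ∑ j ∈ range (ℓ + 1), H k j * B j ℓ) (G := fun k => B k (ℓ + d))
    fun m => ?_) n
  simp only [smul_eq_mul]
  calc ∑ k ∈ range (m + 1), A m k * ∑ j ∈ range (ℓ + 1), H k j * B j ℓ
      = ∑ j ∈ range (ℓ + 1), (∑ k ∈ range (m + 1), A m k * H k j) * B j ℓ := by
        simp only [mul_sum, sum_mul, mul_assoc]
        exact sum_comm
    _ = Mom (m + 1) ℓ := by
        simp only [hH, hfac, sum_range_mul_eq_of_triangular hAu hBl (m + 1) ℓ]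
    _ = ∑ k ∈ range (m + 1), A m k * B k (ℓ + d) := by rw [hshift, hfac]

theorem hessenberg_eq_zero_of_add_lt {B : ℕ → ℕ → K} {d : ℕ} (hBd : ∀ n, B n n ≠ 0)
    (hBl : ∀ n ℓ, ℓ < n → B n ℓ = 0)
    (hHB : ∀ n ℓ, ∑ k ∈ range (ℓ + 1), H n k * B k ℓ = B n (ℓ + d)) (n ℓ : ℕ)
    (h : ℓ + d < n) : H n ℓ = 0 :=
  eq_zero_of_sum_lowerTriangular_smul_eq_zero (L := fun ℓ k => B k ℓ) hBd
    (F := fun k => H n k) (N := n - d) (fun m _ => by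
      simp only [smul_eq_mul, mul_comm (B _ _)]
      rw [hHB, hBl _ _ (by omega)]) ℓ (by omega)

theorem sum_range_hessenberg_smul {M : Type*} [AddCommGroup M] [Module K M] {d : ℕ}
    (hdiag : ∀ n, H n (n + 1) = 1) (hlow : ∀ n ℓ, ℓ + d < n → H n ℓ = 0) (P : ℕ → M)
    (n : ℕ) :
    ∑ ℓ ∈ range (n + 2), H n ℓ • P ℓ = P (n + 1) + ∑ ℓ ∈ Icc (n - d) n, H n ℓ • P ℓ := by
  rw [sum_range_succ, hdiag, one_smul, add_comm]
  congr 1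
  refine (sum_subset (fun x hx => by simp at hx ⊢; omega) fun ℓ h1 h2 => ?_).symm
  simp only [mem_range, mem_Icc] at h1 h2
  rw [hlow n ℓ (by omega), zero_smul]

theorem sum_range_mul_hessenberg {d : ℕ} (hup : ∀ n ℓ, n + 1 < ℓ → H n ℓ = 0)
    (hdiag : ∀ n, H n (n + 1) = 1) (hlow : ∀ n ℓ, ℓ + d < n → H n ℓ = 0) (a : ℕ → K)
    {k N : ℕ} (hN : k + d < N) :
    ∑ m ∈ range N, a m * H m k
      = (if k = 0 then 0 else a (k - 1)) + ∑ m ∈ Icc k (k + d), H m k * a m := by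
  have hbelow : ∑ m ∈ range k, a m * H m k = if k = 0 then 0 else a (k - 1) := by
    rcases k with _ | k
    · simp
    · rw [sum_range_succ, sum_eq_zero fun m hm => by
        rw [hup m (k + 1) (by simp at hm; omega), mul_zero], zero_add, hdiag, mul_one]
      simp
  rw [sum_range_eq_sum_range_of_eq_zero (m := k + d + 1) (by omega) fun m _ _ => by
      rw [hlow m k (by omega), mul_zero],
    ← sum_range_add_sum_Ico _ (by omega : k ≤ k + d + 1), hbelow, Ico_add_one_right_eq_Icc]
  simp only [mul_comm]

end Hessenberg

theorem sum_range_div_mod {M : Type*} [AddCommMonoid M] {r : ℕ} (hr : 0 < r) (n : ℕ)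
    (f : ℕ → ℕ → M) :
    ∑ j ∈ range r, ∑ m ∈ (range (n + 1)).filter (fun m => r * m + j ≤ n), f j m
      = ∑ ℓ ∈ range (n + 1), f (ℓ % r) (ℓ / r) := by
  have hmod : ∀ j m, j < r → (r * m + j) % r = j := fun j m hj => by
    rw [mul_comm, Nat.mul_add_mod_of_lt hj]
  have hdiv : ∀ j m, j < r → (r * m + j) / r = m := fun j m hj => by
    rw [Nat.mul_add_div hr, Nat.div_eq_of_lt hj, add_zero]
  rw [sum_sigma']
  refine sum_nbij' (fun p => r * p.2 + p.1) (fun ℓ => ⟨ℓ % r, ℓ / r⟩) ?_ ?_ ?_ ?_ ?_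
  · rintro ⟨j, m⟩ hp
    simp only [mem_sigma, mem_range, mem_filter] at hp ⊢
    omega
  · intro ℓ hℓ
    simp only [mem_range, mem_sigma, mem_filter] at hℓ ⊢
    have := Nat.div_add_mod ℓ r
    have := Nat.div_le_self ℓ r
    exact ⟨Nat.mod_lt ℓ hr, by omega, by omega⟩
  · rintro ⟨j, m⟩ hp
    simp only [mem_sigma, mem_range] at hp
    simp only [hmod j m hp.1, hdiv j m hp.1]
  · intro ℓ _
    exact Nat.div_add_mod ℓ r
  · rintro ⟨j, m⟩ hp
    simp only [mem_sigma, mem_range] at hp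
    simp only [hmod j m hp.1, hdiv j m hp.1]

theorem momentMatrix_succ {r : ℕ} (hr : 0 < r) (v : ℕ → LF) (n ℓ : ℕ) :
    momentMatrix r v (n + 1) ℓ = momentMatrix r v n (ℓ + r) := by
  rw [momentMatrix, momentMatrix, Nat.add_mod_right, Nat.add_div_right ℓ hr, add_right_comm,
    add_assoc]

theorem qForm_X_pow_eq_sum_momentMatrix {r : ℕ} (hr : 0 < r) (v : ℕ → LF)
    (Cm : ℕ → ℕ → ℂ) (n s : ℕ) :
    qForm r v Cm n (X ^ s) = ∑ ℓ ∈ range (n + 1), momentMatrix r v s ℓ * Cm ℓ n := by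
  have hterm : ∀ j m, v j (C (Cm (r * m + j) n) * X ^ m * X ^ s)
      = Cm (r * m + j) n * v j (X ^ (m + s)) := fun j m => by
    rw [mul_assoc, ← pow_add, C_mul', map_smul, smul_eq_mul]
  simp only [qForm, Cpoly, sum_mul, map_sum, hterm]
  rw [sum_range_div_mod hr n fun j m => Cm (r * m + j) n * v j (X ^ (m + s))]
  refine sum_congr rfl fun ℓ _ => ?_
  rw [Nat.div_add_mod, momentMatrix, mul_comm]

theorem GaussBorel.qForm_X_pow {r : ℕ} {v : ℕ → LF} {A B Cm : ℕ → ℕ → ℂ}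
    (hGB : GaussBorel r v A B) (hr : 0 < r)
    (hCinv : ∀ ℓ n, ∑ k ∈ Icc ℓ n, B ℓ k * Cm k n = if ℓ = n then 1 else 0) (n s : ℕ) :
    qForm r v Cm n (X ^ s) = A s n := by
  have hcol : ∀ k, ∑ ℓ ∈ range (n + 1), B k ℓ * Cm ℓ n = if k = n then 1 else 0 := fun k => by
    rw [← hCinv k n]
    refine (sum_subset (fun x hx => by simp at hx ⊢; omega) fun ℓ h1 h2 => ?_).symm
    simp only [mem_range, mem_Icc] at h1 h2
    rw [hGB.B_lower k ℓ (by omega), zero_mul]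
  calc qForm r v Cm n (X ^ s)
      = ∑ ℓ ∈ range (n + 1), ∑ k ∈ range (s + 1), A s k * (B k ℓ * Cm ℓ n) := by
        simp only [qForm_X_pow_eq_sum_momentMatrix hr, hGB.factor, sum_mul, mul_assoc]
    _ = ∑ k ∈ range (s + 1), A s k * if k = n then 1 else 0 := by
        rw [sum_comm]
        simp only [← mul_sum, hcol]
    _ = A s n := by
        simp only [mul_ite, mul_one, mul_zero, sum_ite_eq', mem_range]
        split_ifs with h
        · rfl
        · exact (hGB.A_upper s n (by omega)).symm

def qFormₗ (r : ℕ) (v : ℕ → LF) (Cm : ℕ → ℕ → ℂ) (n : ℕ) : ℂ[X] →ₗ[ℂ] ℂ :=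
  ∑ j ∈ range r, (v j).comp (LinearMap.mulLeft ℂ (Cpoly r Cm n j))

theorem qFormₗ_apply (r : ℕ) (v : ℕ → LF) (Cm : ℕ → ℕ → ℂ) (n : ℕ) (f : ℂ[X]) :
    qFormₗ r v Cm n f = qForm r v Cm n f := by
  simp [qFormₗ, qForm]

theorem qForm_X_mul {r : ℕ} {v : ℕ → LF} {A H Cm : ℕ → ℕ → ℂ}
    (hAu : ∀ n ℓ, n < ℓ → A n ℓ = 0)
    (hH : ∀ n ℓ, ∑ k ∈ range (n + 1), A n k * H k ℓ = A (n + 1) ℓ)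
    (hup : ∀ n ℓ, n + 1 < ℓ → H n ℓ = 0) (hdiag : ∀ n, H n (n + 1) = 1)
    (hlow : ∀ n ℓ, ℓ + r < n → H n ℓ = 0) (hq : ∀ n s, qForm r v Cm n (X ^ s) = A s n)
    (k : ℕ) (f : ℂ[X]) :
    qForm r v Cm k (X * f)
      = (if k = 0 then 0 else qForm r v Cm (k - 1) f)
        + ∑ m ∈ Icc k (k + r), H m k * qForm r v Cm m f := by
  have hcol : ∀ s, A (s + 1) k
      = (if k = 0 then 0 else A s (k - 1)) + ∑ m ∈ Icc k (k + r), H m k * A s m := fun s => by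
    rw [← hH s k, ← sum_range_eq_sum_range_of_eq_zero (n := s + k + r + 2) (by omega)
      fun m _ _ => by rw [hAu s m (by omega), zero_mul]]
    exact sum_range_mul_hessenberg hup hdiag hlow (A s) (by omega)
  have hmonomial : (qFormₗ r v Cm k).comp (LinearMap.mulLeft ℂ X)
      = (if k = 0 then 0 else qFormₗ r v Cm (k - 1))
        + ∑ m ∈ Icc k (k + r), H m k • qFormₗ r v Cm m := by
    refine lhom_ext' fun s => LinearMap.ext_ring ?_
    simp only [LinearMap.comp_apply, ← X_pow_eq_monomial, LinearMap.mulLeft_apply, ← pow_succ',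
      LinearMap.add_apply, LinearMap.sum_apply, LinearMap.smul_apply, qFormₗ_apply, hq, hcol,
      smul_eq_mul]
    split_ifs <;> simp [qFormₗ_apply, hq]
  have h := LinearMap.congr_fun hmonomial f
  split_ifs at h ⊢ <;> simpa [qFormₗ_apply] using h

theorem stmt2 (r : ℕ) (hr : 1 ≤ r) (v : ℕ → LF) (A B Cm : ℕ → ℕ → ℂ)
    (hGB : GaussBorel r v A B)
    (hCinv : ∀ ℓ n, ∑ k ∈ Finset.Icc ℓ n, B ℓ k * Cm k n = if ℓ = n then 1 else 0)
    (P : ℕ → Polynomial ℂ)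
    (hP : ∀ n, (Polynomial.X : Polynomial ℂ) ^ n
      = ∑ k ∈ Finset.range (n + 1), Polynomial.C (A n k) * P k) :
    -- there is a unique `H` with `A H = Λ A`
    (∃! H : ℕ → ℕ → ℂ,
      ∀ n ℓ, ∑ k ∈ Finset.range (n + 1), A n k * H k ℓ = A (n + 1) ℓ) ∧
    -- and any such `H` satisfies the asserted properties
    (∀ H : ℕ → ℕ → ℂ,
      (∀ n ℓ, ∑ k ∈ Finset.range (n + 1), A n k * H k ℓ = A (n + 1) ℓ) →
      -- `H B = B (Λᵀ)^r`
      ((∀ n ℓ, ∑ k ∈ Finset.range (ℓ + 1), H n k * B k ℓ = B n (ℓ + r)) ∧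
       -- banded unit-lower-Hessenberg with `r` subdiagonals
       (∀ n, H n (n + 1) = 1) ∧
       (∀ n ℓ, n + 1 < ℓ → H n ℓ = 0) ∧
       (∀ n ℓ, ℓ + r < n → H n ℓ = 0) ∧
       -- recurrence for the type II polynomials
       (∀ n, Polynomial.X * P n
          = P (n + 1) + ∑ ℓ ∈ Finset.Icc (n - r) n, Polynomial.C (H n ℓ) * P ℓ) ∧
       -- recurrence for the type I linear forms (with `q_{-1} := 0`)
       (∀ k f, qForm r v Cm k (Polynomial.X * f)
          = (if k = 0 then 0 else qForm r v Cm (k - 1) f)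
            + ∑ m ∈ Finset.Icc k (k + r), H m k * qForm r v Cm m f))) := by
  have hA := hGB.A_diag
  have hAu := hGB.A_upper
  refine ⟨existsUnique_lowerTriangular_mul_eq (fun n => by simp [hA]) fun n ℓ => A (n + 1) ℓ,
    fun H hH => ?_⟩
  have hup := hessenberg_eq_zero_of_succ_lt hA hAu hH
  have hdiag := hessenberg_succ_self hA hAu hH
  have hHB := hessenberg_mul_eq_mul_shift hA hAu hGB.B_lower hH hGB.factor (momentMatrix_succ hr v)
  have hlow := hessenberg_eq_zero_of_add_lt hGB.B_diag hGB.B_lower hHB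
  refine ⟨hHB, hdiag, hup, hlow, fun n => ?_,
    qForm_X_mul hAu hH hup hdiag hlow (hGB.qForm_X_pow hr hCinv)⟩
  have hPsmul : ∀ n, X ^ n = ∑ k ∈ range (n + 1), A n k • P k := by
    simpa only [C_mul'] using hP
  have hXP := apply_eq_sum_hessenberg_smul hA hAu hH (P := P) (LinearMap.mulLeft ℂ (X : ℂ[X]))
    (fun n => by rw [LinearMap.mulLeft_apply, ← hPsmul, ← hPsmul, pow_succ']) n
  rw [LinearMap.mulLeft_apply] at hXP
  simpa only [C_mul'] using hXP.trans (sum_range_hessenberg_smul hdiag hlow P n)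

end
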